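/- Let g be a positive random variable with E[1/g] < ∞, and for integers m ≥ 1 define ν_m := (E[(1/g)^{1/m}])^m. Fix an integer t ≥ 2 and define L_s(x) := s · 2^{x/s} (ν_s ν_{s−1} ⋯ ν_1)^{1/s} − s ν_1 for integers s ≥ 1. Then for every real β, E_g[ min_{b ∈ ℝ} ( (2^b − 1)/g + L_{t−1}(β − b) ) ] = L_t(β). -/

import Mathlib

open MeasureTheory

/-- Fractional moment constant `ν_m := (E[(1/g)^{1/m}])^m` of the channel state `g`. -/
noncomputable def nuM {Ω : Type*} [MeasurableSpace Ω] (μ : Measure Ω) (g : Ω → ℝ)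
    (m : ℕ) : ℝ :=
  (∫ ω, (1 / g ω) ^ ((1 : ℝ) / (m : ℝ)) ∂μ) ^ (m : ℝ)

/-- Cost-to-go function of the relaxed problem:
`L_s(x) = s · 2^{x/s} (ν_s ν_{s−1} ⋯ ν₁)^{1/s} − s ν₁`. -/
noncomputable def Lrelax {Ω : Type*} [MeasurableSpace Ω] (μ : Measure Ω) (g : Ω → ℝ)
    (s : ℕ) (x : ℝ) : ℝ :=
  (s : ℝ) * (2 : ℝ) ^ (x / (s : ℝ)) * (∏ i ∈ Finset.Icc 1 s, nuM μ g i) ^ ((1 : ℝ) / (s : ℝ))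
    - (s : ℝ) * nuM μ g 1

/-!
For a fixed channel state `g` and `P = ν_s ⋯ ν_1`, the inner objective is
`(1/g)·2^b + s·(2^(β-b)·P)^(1/s)` up to constants. The product of the first term with the
`s`-th power of the second does not depend on `b`, so weighted AM–GM with weights
`1/(s+1), s/(s+1)` bounds the sum below by `(s+1)·(2^β·P/g)^(1/(s+1))`, with equality when
the two terms agree. Taking expectations, `E[(1/g)^(1/(s+1))] = ν_{s+1}^(1/(s+1))` supplies the
missing factor of the product `ν_{s+1} ⋯ ν_1`, and `E[1/g] = ν_1`.
-/

open Real

theorem Real.rpow_le_one_add {x r : ℝ} (hx : 0 ≤ x) (hr₀ : 0 ≤ r) (hr₁ : r ≤ 1) :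
    x ^ r ≤ 1 + x := by
  rcases le_total x 1 with hx₁ | hx₁
  · linarith [rpow_le_one hx hx₁ hr₀]
  · calc x ^ r ≤ x ^ (1 : ℝ) := rpow_le_rpow_of_exponent_le hx₁ hr₁
      _ ≤ 1 + x := by rw [rpow_one]; linarith

theorem Real.add_one_mul_rpow_le_add_mul {u v s : ℝ} (hu : 0 ≤ u) (hv : 0 ≤ v) (hs : 0 ≤ s) :
    (s + 1) * (u * v ^ s) ^ (1 / (s + 1)) ≤ u + s * v := by
  have hs₁ : 0 < s + 1 := by linarith
  have amgm := geom_mean_le_arith_mean2_weighted (w₁ := 1 / (s + 1)) (w₂ := s / (s + 1))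
    (by positivity) (by positivity) hu hv (by field_simp; ring)
  rw [mul_rpow hu (rpow_nonneg hv s), ← rpow_mul hv, mul_one_div]
  calc (s + 1) * (u ^ (1 / (s + 1)) * v ^ (s / (s + 1)))
      ≤ (s + 1) * (1 / (s + 1) * u + s / (s + 1) * v) := by gcongr
    _ = u + s * v := by field_simp

theorem Real.isLeast_range_mul_rpow_add_mul_rpow {B a P s β : ℝ} (hB : 0 < B) (hB₁ : B ≠ 1)
    (ha : 0 < a) (hP : 0 < P) (hs : 0 < s) :
    IsLeast (Set.range fun b : ℝ => a * B ^ b + s * (B ^ (β - b) * P) ^ (1 / s))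
      ((s + 1) * (a * (B ^ β * P)) ^ (1 / (s + 1))) := by
  have hprod_const : ∀ b : ℝ, a * B ^ b * ((B ^ (β - b) * P) ^ (1 / s)) ^ s = a * (B ^ β * P) := by
    intro b
    rw [one_div, rpow_inv_rpow (by positivity) hs.ne', mul_assoc, ← mul_assoc (B ^ b),
      ← rpow_add hB, add_sub_cancel]
  refine ⟨?_, ?_⟩
  · set m := (a * (B ^ β * P)) ^ (1 / (s + 1)) with hm_def
    have hm : 0 < m := by positivity
    have hmpow : m ^ s * m = a * (B ^ β * P) := by
      rw [← rpow_add_one hm.ne', hm_def, one_div, rpow_inv_rpow (by positivity) (by linarith)]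
    refine ⟨logb B (m / a), ?_⟩
    have hu : a * B ^ logb B (m / a) = m := by
      rw [rpow_logb hB hB₁ (by positivity)]; field_simp
    have hv : (B ^ (β - logb B (m / a)) * P) ^ (1 / s) = m := by
      have : B ^ (β - logb B (m / a)) * P = m ^ s := by
        rw [rpow_sub hB, rpow_logb hB hB₁ (by positivity)]
        field_simp
        linarith [hmpow]
      rw [this, one_div, rpow_rpow_inv hm.le hs.ne']
    simp only [hu, hv]
    ring
  · rintro _ ⟨b, rfl⟩
    simpa only [hprod_const] using
      add_one_mul_rpow_le_add_mul (u := a * B ^ b) (v := (B ^ (β - b) * P) ^ (1 / s))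
        (by positivity) (by positivity) hs.le

theorem MeasureTheory.Integrable.rpow_of_le_one {Ω : Type*} [MeasurableSpace Ω] {μ : Measure Ω}
    [IsFiniteMeasure μ] {f : Ω → ℝ} (hf : Integrable f μ) {r : ℝ} (hr₀ : 0 ≤ r) (hr₁ : r ≤ 1) :
    Integrable (fun ω => f ω ^ r) μ := by
  refine ((integrable_const 1).add hf.norm).mono' (hf.aemeasurable.pow_const r).aestronglyMeasurable
    (.of_forall fun ω => ?_)
  simp only [Pi.add_apply, norm_eq_abs]
  exact (abs_rpow_le_abs_rpow _ _).trans (rpow_le_one_add (abs_nonneg _) hr₀ hr₁)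

section FractionalMoments

variable {Ω : Type*} [MeasurableSpace Ω] {μ : Measure Ω} {g : Ω → ℝ}

theorem integrable_one_div_rpow_one_div_natCast [IsFiniteMeasure μ]
    (hint : Integrable (fun ω => 1 / g ω) μ) (m : ℕ) :
    Integrable (fun ω => (1 / g ω) ^ ((1 : ℝ) / m)) μ :=
  hint.rpow_of_le_one (by positivity) (one_div (m : ℝ) ▸ Nat.cast_inv_le_one m)

theorem nuM_pos [IsFiniteMeasure μ] [NeZero μ] (hgpos : ∀ ω, 0 < g ω)
    (hint : Integrable (fun ω => 1 / g ω) μ) (m : ℕ) : 0 < nuM μ g m := by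
  refine rpow_pos_of_pos ?_ _
  rw [integral_pos_iff_support_of_nonneg (fun ω => (rpow_pos_of_pos (one_div_pos.2 (hgpos ω)) _).le)
    (integrable_one_div_rpow_one_div_natCast hint m)]
  have : Function.support (fun ω => (1 / g ω) ^ ((1 : ℝ) / m)) = Set.univ :=
    Set.eq_univ_of_forall fun ω => (rpow_pos_of_pos (one_div_pos.2 (hgpos ω)) _).ne'
  rw [this]
  exact Measure.measure_univ_pos.2 (NeZero.ne μ)

theorem integral_one_div_rpow_eq_nuM_rpow (hg : ∀ ω, 0 ≤ g ω) {m : ℕ} (hm : m ≠ 0) :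
    ∫ ω, (1 / g ω) ^ ((1 : ℝ) / m) ∂μ = nuM μ g m ^ ((1 : ℝ) / m) := by
  rw [nuM, ← rpow_mul (integral_nonneg fun ω => rpow_nonneg (one_div_nonneg.2 (hg ω)) _),
    mul_one_div_cancel (by exact_mod_cast hm), rpow_one]

theorem integral_one_div_eq_nuM_one : ∫ ω, 1 / g ω ∂μ = nuM μ g 1 := by
  simp [nuM]

theorem Lrelax_eq_mul_rpow (hg : ∀ ω, 0 ≤ g ω) (s : ℕ) (x : ℝ) :
    Lrelax μ g s x = s * (2 ^ x * ∏ i ∈ Finset.Icc 1 s, nuM μ g i) ^ ((1 : ℝ) / s)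
      - s * nuM μ g 1 := by
  have hprod : 0 ≤ ∏ i ∈ Finset.Icc 1 s, nuM μ g i := Finset.prod_nonneg fun i _ =>
    rpow_nonneg (integral_nonneg fun ω => rpow_nonneg (one_div_nonneg.2 (hg ω)) _) _
  rw [Lrelax, mul_rpow (by positivity) hprod, ← rpow_mul zero_le_two, mul_one_div, mul_assoc]

theorem isLeast_range_energy_add_Lrelax [IsFiniteMeasure μ] [NeZero μ] (hgpos : ∀ ω, 0 < g ω)
    (hint : Integrable (fun ω => 1 / g ω) μ) {s : ℕ} (hs : s ≠ 0) (β : ℝ) {G : ℝ} (hG : 0 < G) :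
    IsLeast (Set.range fun b : ℝ => ((2 : ℝ) ^ b - 1) / G + Lrelax μ g s (β - b))
      ((s + 1) * (2 ^ β * ∏ i ∈ Finset.Icc 1 s, nuM μ g i) ^ (1 / ((s : ℝ) + 1))
        * (1 / G) ^ (1 / ((s : ℝ) + 1)) - 1 / G - s * nuM μ g 1) := by
  have hprod : 0 < ∏ i ∈ Finset.Icc 1 s, nuM μ g i :=
    Finset.prod_pos fun i _ => nuM_pos hgpos hint i
  have key := isLeast_range_mul_rpow_add_mul_rpow (β := β) (s := s) (a := 1 / G) zero_lt_two
    one_lt_two.ne' (by positivity) hprod (by positivity)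
  have hshift : Monotone fun y : ℝ => y - 1 / G - s * nuM μ g 1 := fun _ _ h => by simpa using h
  convert hshift.map_isLeast key using 1
  · rfl
  · rw [← Set.range_comp]
    congr 1
    ext b
    simp only [Function.comp_apply, Lrelax_eq_mul_rpow (fun ω => (hgpos ω).le)]
    ring
  · rw [mul_rpow (x := 1 / G) (by positivity) (by positivity)]
    ring

end FractionalMoments

theorem relaxed_cost_to_go_recursion_general {Ω : Type*} [MeasurableSpace Ω] (μ : Measure Ω)
    [IsProbabilityMeasure μ]
    (g : Ω → ℝ) (hgpos : ∀ ω, 0 < g ω)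
    (hint : Integrable (fun ω => 1 / g ω) μ)
    (t : ℕ) (ht : 2 ≤ t) (β : ℝ) :
    ∫ ω, sInf (Set.range fun b : ℝ =>
        ((2 : ℝ) ^ b - 1) / g ω + Lrelax μ g (t - 1) (β - b)) ∂μ = Lrelax μ g t β := by
  obtain ⟨s, rfl⟩ : ∃ s, t = s + 1 := ⟨t - 1, by omega⟩
  have hs : s ≠ 0 := by omega
  have hg : ∀ ω, 0 ≤ g ω := fun ω => (hgpos ω).le
  set P := ∏ i ∈ Finset.Icc 1 s, nuM μ g i
  have hP : 0 < P := Finset.prod_pos fun i _ => nuM_pos hgpos hint i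
  set K := ((s : ℝ) + 1) * (2 ^ β * P) ^ (1 / ((s : ℝ) + 1))
  have hpoint : ∀ ω, sInf (Set.range fun b : ℝ =>
      ((2 : ℝ) ^ b - 1) / g ω + Lrelax μ g (s + 1 - 1) (β - b))
      = K * (1 / g ω) ^ (1 / ((s : ℝ) + 1)) - 1 / g ω - s * nuM μ g 1 := fun ω => by
    rw [Nat.add_sub_cancel, (isLeast_range_energy_add_Lrelax hgpos hint hs β (hgpos ω)).csInf_eq]
  have hmoment := integral_one_div_rpow_eq_nuM_rpow (μ := μ) (m := s + 1) hg (by omega)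
  push_cast at hmoment
  have hint' := (integrable_one_div_rpow_one_div_natCast hint (s + 1)).const_mul K
  push_cast at hint'
  rw [integral_congr_ae (.of_forall hpoint), integral_sub ?_ (integrable_const _),
    integral_sub hint' hint, integral_const_mul, hmoment, integral_one_div_eq_nuM_one,
    integral_const, probReal_univ, one_smul, Lrelax_eq_mul_rpow hg,
    Finset.prod_Icc_succ_top (by omega), ← mul_assoc,
    mul_rpow (by positivity) (nuM_pos hgpos hint _).le]
  · push_cast
    ring
  · exact hint'.sub hint

/-- One step of the relaxed dynamic program: for `t ≥ 2` and any `β`,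
`E_g[ min_{b ∈ ℝ} ( (2^b − 1)/g + L_{t−1}(β − b) ) ] = L_t(β)`. -/
theorem relaxed_cost_to_go_recursion {Ω : Type*} [MeasurableSpace Ω] (μ : Measure Ω)
    [IsProbabilityMeasure μ]
    (g : Ω → ℝ) (hgpos : ∀ ω, 0 < g ω) (hgmeas : Measurable g)
    (hint : Integrable (fun ω => 1 / g ω) μ)
    (t : ℕ) (ht : 2 ≤ t) (β : ℝ) :
    ∫ ω, sInf (Set.range fun b : ℝ =>
        ((2 : ℝ) ^ b - 1) / g ω + Lrelax μ g (t - 1) (β - b)) ∂μ = Lrelax μ g t β :=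
  relaxed_cost_to_go_recursion_general μ g hgpos hint t ht β
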